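/- Let $f : \mathbb{R}^d \to \mathbb{C}$ be bounded and measurable, supported outside the cube $3Q$ where $Q$ is a dyadic cube with center $c_Q$. Let $k \in \mathbb{Z}$ with $2^{-k} \geq \ell(Q)$ (the side length of $Q$), and define $F_k(x) = M_k f(x) - E_k f(x) - (M_k f(c_Q) - E_k f(c_Q))$, where $M_k$ averages over the ball of radius $2^{-k}$ and $E_k$ is the dyadic conditional expectation at scale $2^{-k}$. Then for every $x \in Q$, $|F_k(x)| \leq C_d\, 2^k \ell(Q) \|f\|_\infty$. -/

import Mathlib

/-!
Since `2^(-k) ≥ ℓ(Q)`, the points `x` and `c_Q` lie in the same dyadic cube of side `2^(-k)`, so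
the `E_k` terms cancel. Two balls of equal radius `r` differ in a set of relative measure at most
`1 - (1 - |x - c|/r)^d ≤ d |x - c| / r` (Bernoulli), because `B(x, r) \ B(c, r)` is contained in
the annulus `B(x, r) \ B(x, r - |x - c|)`; with `|x - c_Q| ≤ √d ℓ(Q) / 2` this bounds the
difference of the ball averages by `d √d 2^k ℓ(Q) ‖f‖_∞`.
-/

open MeasureTheory

/-- The dyadic cube of side length `2^(-n)` containing `x`. -/
def dyadicCubeOf (d : ℕ) (n : ℤ) (x : EuclideanSpace ℝ (Fin d)) :
    Set (EuclideanSpace ℝ (Fin d)) :=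
  {y | ∀ i, ⌊(2:ℝ) ^ n * y i⌋ = ⌊(2:ℝ) ^ n * x i⌋}

/-- The dyadic conditional expectation at scale `2^(-n)` (for `ℂ`-valued functions). -/
noncomputable def dyadicCondExp (d : ℕ) (n : ℤ) (f : EuclideanSpace ℝ (Fin d) → ℂ)
    (x : EuclideanSpace ℝ (Fin d)) : ℂ :=
  ⨍ y in dyadicCubeOf d n x, f y

/-- The averaging operator over the ball of radius `2^(-k)`. -/
noncomputable def ballAvg (d : ℕ) (k : ℤ) (f : EuclideanSpace ℝ (Fin d) → ℂ)
    (x : EuclideanSpace ℝ (Fin d)) : ℂ :=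
  ⨍ y in Metric.ball x ((2:ℝ) ^ (-k)), f y

open Metric Module

lemma floor_two_zpow_add_mul_div (k : ℤ) (j : ℕ) (s : ℝ) :
    ⌊(2:ℝ) ^ (k + j) * s⌋ / 2 ^ j = ⌊(2:ℝ) ^ k * s⌋ := by
  have h : (2:ℝ) ^ (k + j) * s / ((2 ^ j : ℕ) : ℝ) = (2:ℝ) ^ k * s := by
    rw [zpow_add₀ two_ne_zero, zpow_natCast]
    push_cast
    field_simp
  rw [← h, Int.floor_div_natCast]
  push_cast
  rfl

lemma floor_two_zpow_mul_congr {k n : ℤ} (hkn : k ≤ n) {s t : ℝ}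
    (h : ⌊(2:ℝ) ^ n * s⌋ = ⌊(2:ℝ) ^ n * t⌋) : ⌊(2:ℝ) ^ k * s⌋ = ⌊(2:ℝ) ^ k * t⌋ := by
  obtain ⟨j, rfl⟩ := Int.le.dest hkn
  rw [← floor_two_zpow_add_mul_div, h, floor_two_zpow_add_mul_div]

lemma floor_two_zpow_mul_eq {n m : ℤ} {s : ℝ} (h₁ : (2:ℝ) ^ (-n) * m ≤ s)
    (h₂ : s < (2:ℝ) ^ (-n) * (m + 1)) : ⌊(2:ℝ) ^ n * s⌋ = m := by
  have h2n : (0:ℝ) < 2 ^ n := by positivity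
  rw [zpow_neg] at h₁ h₂
  rw [Int.floor_eq_iff]
  exact ⟨(inv_mul_le_iff₀ h2n).1 h₁, (lt_inv_mul_iff₀ h2n).1 h₂⟩

lemma dyadicCubeOf_eq_of_mem {d : ℕ} {k n : ℤ} (hkn : k ≤ n) {x y : EuclideanSpace ℝ (Fin d)}
    (hy : y ∈ dyadicCubeOf d n x) : dyadicCubeOf d k y = dyadicCubeOf d k x := by
  ext z
  exact forall_congr' fun i => by rw [floor_two_zpow_mul_congr hkn (hy i)]

lemma dyadicCondExp_eq_of_mem {d : ℕ} {k n : ℤ} (hkn : k ≤ n) (f : EuclideanSpace ℝ (Fin d) → ℂ)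
    {x y : EuclideanSpace ℝ (Fin d)} (hy : y ∈ dyadicCubeOf d n x) :
    dyadicCondExp d k f y = dyadicCondExp d k f x := by
  rw [dyadicCondExp, dyadicCondExp, dyadicCubeOf_eq_of_mem hkn hy]

lemma EuclideanSpace.dist_le_sqrt_card_mul {ι : Type*} [Fintype ι] {x y : EuclideanSpace ℝ ι}
    {B : ℝ} (h : ∀ i, dist (x i) (y i) ≤ B) : dist x y ≤ √(Fintype.card ι) * B := by
  rcases isEmpty_or_nonempty ι with hι | ⟨⟨i₀⟩⟩
  · simp [Subsingleton.elim x y]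
  have hB : 0 ≤ B := dist_nonneg.trans (h i₀)
  have hsum : ∑ i, dist (x i) (y i) ^ 2 ≤ Fintype.card ι * B ^ 2 :=
    (Finset.sum_le_sum fun i _ => pow_le_pow_left₀ dist_nonneg (h i) 2).trans_eq (by simp)
  calc dist x y ≤ √(Fintype.card ι * B ^ 2) := by
        rw [EuclideanSpace.dist_eq]; exact Real.sqrt_le_sqrt hsum
    _ = √(Fintype.card ι) * B := by rw [Real.sqrt_mul (Nat.cast_nonneg _), Real.sqrt_sq hB]

section SetAverage

variable {α F : Type*} [MeasurableSpace α] {μ : Measure α} [NormedAddCommGroup F]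
  [NormedSpace ℝ F] {f : α → F} {M : ℝ} {s t : Set α}

lemma norm_setIntegral_sub_setIntegral_le (hs : MeasurableSet s) (ht : MeasurableSet t)
    (hμs : μ s ≠ ⊤) (hμt : μ t ≠ ⊤) (hf : AEStronglyMeasurable f μ) (hM : ∀ y, ‖f y‖ ≤ M) :
    ‖∫ y in s, f y ∂μ - ∫ y in t, f y ∂μ‖ ≤ M * (μ.real (s \ t) + μ.real (t \ s)) := by
  have hint : ∀ u, μ u ≠ ⊤ → IntegrableOn f u μ := fun u hu =>
    Measure.integrableOn_of_bounded hu hf (ae_of_all _ hM)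
  have hdiff : ∀ u v, μ u ≠ ⊤ → ‖∫ y in u \ v, f y ∂μ‖ ≤ M * μ.real (u \ v) := fun u v hu =>
    norm_setIntegral_le_of_norm_le_const ((measure_mono Set.sdiff_subset).trans_lt hu.lt_top)
      fun y _ => hM y
  rw [← integral_inter_add_sdiff ht (hint s hμs), ← integral_inter_add_sdiff hs (hint t hμt),
    Set.inter_comm t s, add_sub_add_left_eq_sub, mul_add]
  exact (norm_sub_le _ _).trans (add_le_add (hdiff s t hμs) (hdiff t s hμt))

lemma norm_setAverage_sub_setAverage_le (hs : MeasurableSet s) (ht : MeasurableSet t)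
    (hμs : μ s ≠ ⊤) (hst : μ s = μ t) (hf : AEStronglyMeasurable f μ) (hM : ∀ y, ‖f y‖ ≤ M) :
    ‖⨍ y in s, f y ∂μ - ⨍ y in t, f y ∂μ‖ ≤ M * (μ.real (s \ t) + μ.real (t \ s)) / μ.real s := by
  have hreal : μ.real t = μ.real s := by simp only [measureReal_def, hst]
  rw [setAverage_eq, setAverage_eq, hreal, ← smul_sub, norm_smul, norm_inv,
    Real.norm_of_nonneg measureReal_nonneg, inv_mul_eq_div]
  gcongr
  exact norm_setIntegral_sub_setIntegral_le hs ht hμs (hst ▸ hμs) hf hM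

end SetAverage

section BallAverage

variable {E F : Type*} [NormedAddCommGroup E] [NormedSpace ℝ E] [MeasurableSpace E] [BorelSpace E]
  [FiniteDimensional ℝ E] (μ : Measure E) [μ.IsAddHaarMeasure]

lemma measureReal_ball_sdiff_ball_le [Nontrivial E] (x c : E) {r : ℝ} (hr : 0 < r) :
    μ.real (ball x r \ ball c r) ≤ finrank ℝ E * (dist x c / r) * μ.real (ball x r) := by
  set δ := dist x c
  have hδ0 : 0 ≤ δ := dist_nonneg
  rcases le_or_gt δ r with hδ | hδ
  · have hsub : ball x r \ ball c r ⊆ ball x r \ ball x (r - δ) :=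
      Set.sdiff_subset_sdiff_right (ball_subset_ball' (by linarith))
    have hinner : μ.real (ball x (r - δ)) = (1 - δ / r) ^ finrank ℝ E * μ.real (ball x r) := by
      have hfac : r - δ = (1 - δ / r) * r := by field_simp
      have hfac0 : 0 ≤ 1 - δ / r := by rw [sub_nonneg, div_le_one hr]; exact hδ
      rw [hfac, measureReal_def, Measure.addHaar_ball_mul μ x hfac0, ENNReal.toReal_mul,
        ENNReal.toReal_ofReal (by positivity), ← measureReal_def,
        Measure.addHaar_real_ball_center μ x]
    have hbernoulli : 1 - finrank ℝ E * (δ / r) ≤ (1 - δ / r) ^ finrank ℝ E := by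
      have h2 : -2 ≤ -(δ / r) := by
        have : δ / r ≤ 1 := (div_le_one hr).2 hδ
        linarith
      simpa [sub_eq_add_neg] using one_add_mul_le_pow h2 (finrank ℝ E)
    calc μ.real (ball x r \ ball c r) ≤ μ.real (ball x r \ ball x (r - δ)) :=
          measureReal_mono hsub (measure_mono Set.sdiff_subset |>.trans_lt measure_ball_lt_top).ne
      _ = μ.real (ball x r) - μ.real (ball x (r - δ)) :=
          measureReal_sdiff (ball_subset_ball (by linarith)) measurableSet_ball
            measure_ball_lt_top.ne
      _ = (1 - (1 - δ / r) ^ finrank ℝ E) * μ.real (ball x r) := by rw [hinner]; ring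
      _ ≤ finrank ℝ E * (δ / r) * μ.real (ball x r) := by gcongr; linarith
  · have hone : 1 ≤ finrank ℝ E * (δ / r) :=
      one_le_mul_of_one_le_of_one_le (Nat.one_le_cast.2 finrank_pos) ((one_lt_div hr).2 hδ).le
    calc μ.real (ball x r \ ball c r) ≤ μ.real (ball x r) :=
          measureReal_mono Set.sdiff_subset measure_ball_lt_top.ne
      _ ≤ finrank ℝ E * (δ / r) * μ.real (ball x r) := le_mul_of_one_le_left measureReal_nonneg hone

lemma norm_ballAverage_sub_ballAverage_le [NormedAddCommGroup F] [NormedSpace ℝ F] {f : E → F}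
    {M : ℝ} (hf : AEStronglyMeasurable f μ) (hM : ∀ y, ‖f y‖ ≤ M) (x c : E) {r : ℝ} (hr : 0 < r) :
    ‖⨍ y in ball x r, f y ∂μ - ⨍ y in ball c r, f y ∂μ‖ ≤ 2 * finrank ℝ E * M * (dist x c / r) := by
  rcases eq_or_ne x c with rfl | hxc
  · simp
  have := nontrivial_of_ne x c hxc
  have hM0 : 0 ≤ M := (norm_nonneg _).trans (hM x)
  have hV : 0 < μ.real (ball x r) :=
    ENNReal.toReal_pos (measure_ball_pos μ x hr).ne' measure_ball_lt_top.ne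
  have hxc_sdiff := measureReal_ball_sdiff_ball_le μ x c hr
  have hcx_sdiff :
      μ.real (ball c r \ ball x r) ≤ finrank ℝ E * (dist x c / r) * μ.real (ball x r) := by
    rw [dist_comm, Measure.addHaar_real_ball_center μ x, ← Measure.addHaar_real_ball_center μ c]
    exact measureReal_ball_sdiff_ball_le μ c x hr
  calc _ ≤ M * (μ.real (ball x r \ ball c r) + μ.real (ball c r \ ball x r)) / μ.real (ball x r) :=
        norm_setAverage_sub_setAverage_le measurableSet_ball measurableSet_ball
          measure_ball_lt_top.ne (by rw [Measure.addHaar_ball_center μ x,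
            Measure.addHaar_ball_center μ c]) hf hM
    _ ≤ M * (2 * (finrank ℝ E * (dist x c / r) * μ.real (ball x r))) / μ.real (ball x r) := by
        gcongr; linarith
    _ = 2 * finrank ℝ E * M * (dist x c / r) := by field_simp

end BallAverage

/-- Let `Q` be the dyadic cube of side length `2^(-n)` determined by `m : Fin d → ℤ`,
with center `c_Q`, and let `f` be bounded, measurable and vanishing on `3Q`. Then for
`2^(-k) ≥ ℓ(Q)` (i.e. `k ≤ n`) and all `x ∈ Q`,
`|M_k f(x) - E_k f(x) - (M_k f(c_Q) - E_k f(c_Q))| ≤ C_d 2^k ℓ(Q) ‖f‖_∞`. -/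
theorem smoothness_far_from_support (d : ℕ) :
    ∃ C : ℝ, 0 < C ∧ ∀ (n k : ℤ) (m : Fin d → ℤ) (c : EuclideanSpace ℝ (Fin d)),
      (∀ i, c i = (2:ℝ) ^ (-n) * (m i + 1/2)) →
      k ≤ n →
      ∀ (f : EuclideanSpace ℝ (Fin d) → ℂ) (Mb : ℝ), Measurable f →
      (∀ y, ‖f y‖ ≤ Mb) →
      (∀ y : EuclideanSpace ℝ (Fin d),
        (∀ i, |y i - c i| ≤ 3 * (2:ℝ) ^ (-n) / 2) → f y = 0) →
      ∀ x : EuclideanSpace ℝ (Fin d),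
        (∀ i, (2:ℝ) ^ (-n) * m i ≤ x i ∧ x i < (2:ℝ) ^ (-n) * (m i + 1)) →
        ‖ballAvg d k f x - dyadicCondExp d k f x
            - (ballAvg d k f c - dyadicCondExp d k f c)‖
          ≤ C * (2:ℝ) ^ k * (2:ℝ) ^ (-n) * Mb := by
  refine ⟨d * √d + 1, by positivity, ?_⟩
  intro n k m c hc hkn f Mb hf hMb _ x hx
  have hc_mem : ∀ i, (2:ℝ) ^ (-n) * m i ≤ c i ∧ c i < (2:ℝ) ^ (-n) * (m i + 1) := fun i => by
    have : (0:ℝ) < 2 ^ (-n) := by positivity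
    rw [hc i]; constructor <;> nlinarith
  have hcQ : c ∈ dyadicCubeOf d n x := fun i => by
    rw [floor_two_zpow_mul_eq (hc_mem i).1 (hc_mem i).2, floor_two_zpow_mul_eq (hx i).1 (hx i).2]
  have hdist : dist x c ≤ √d * ((2:ℝ) ^ (-n) / 2) := by
    have hcoord : ∀ i, dist (x i) (c i) ≤ (2:ℝ) ^ (-n) / 2 := fun i => by
      rw [Real.dist_eq, abs_le, hc i]; constructor <;> linarith [hx i]
    simpa using EuclideanSpace.dist_le_sqrt_card_mul hcoord
  have hMb0 : 0 ≤ Mb := (norm_nonneg _).trans (hMb 0)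
  rw [dyadicCondExp_eq_of_mem hkn f hcQ, sub_sub_sub_cancel_right]
  calc ‖ballAvg d k f x - ballAvg d k f c‖
      ≤ 2 * finrank ℝ (EuclideanSpace ℝ (Fin d)) * Mb * (dist x c / 2 ^ (-k)) :=
        norm_ballAverage_sub_ballAverage_le volume hf.aestronglyMeasurable hMb x c (by positivity)
    _ ≤ 2 * d * Mb * (√d * ((2:ℝ) ^ (-n) / 2) / 2 ^ (-k)) := by
        rw [finrank_euclideanSpace_fin]; gcongr
    _ = d * √d * 2 ^ k * 2 ^ (-n) * Mb := by rw [zpow_neg 2 k, div_inv_eq_mul]; ring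
    _ ≤ (d * √d + 1) * 2 ^ k * 2 ^ (-n) * Mb := by gcongr; linarith
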